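/- For every positive integer D, there exists a bipartite graph H with parts A and B, of maximum degree at most D, together with a partition of A into classes of size 2D² − 1 and a partition of B into designated pairs, such that no vertex of A is adjacent to both vertices of any pair in B, and H has no independent transversal with respect to this partition. -/

import Mathlib

/-- An independent transversal of a vertex-partitioned graph. -/
def HasIT {V ι : Type*} (G : SimpleGraph V) (p : V → ι) : Prop :=
  ∃ f : ι → V, (∀ i, p (f i) = i) ∧ ∀ i j, ¬ G.Adj (f i) (f j)

/-!
Group the vertices of `A` into gadgets. A gadget has an `S`-side and a `T`-side, each made of `D`
groups of at most `D` vertices, and for every group `g` of the `S`-side and `h` of the `T`-side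
there is a pair in `B` whose first vertex is joined to group `g` and whose second vertex is joined
to group `h`. All degrees are at most `D`, and an independent transversal cannot use both an
`S`-vertex and a `T`-vertex of one gadget: both vertices of the corresponding pair would be blocked.

With `Q = D²` vertices per side, take two chains of `Q` gadgets `(X, 0), …, (X, Q - 1)`. The root
class is the union of the `S`-sides of the two gadgets `(X, 0)`, minus one vertex; class `(X, j)` is
the `T`-side of `(X, j)` minus its last vertex, together with the `S`-side of `(X, j + 1)` or, for
`j = Q - 1`, with the last `T`-vertices of all gadgets of the chain. Every class has `2Q - 1`
vertices. The root forces an `S`-vertex in some `(X, 0)`, induction along that chain forces one in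
every `(X, j)`, and then the last class of the chain has no admissible vertex.
-/

open Function Set

variable {α β κ π : Type*}

def bipartiteOfRel (r : α → β → Prop) : SimpleGraph (α ⊕ β) where
  Adj
    | .inl a, .inr b => r a b
    | .inr b, .inl a => r a b
    | _, _ => False
  symm := ⟨by rintro (a | b) (a' | b') h <;> exact h⟩
  loopless := ⟨by rintro (a | b) h <;> exact h⟩

section bipartiteOfRel

variable (r : α → β → Prop)

lemma neighborSet_bipartiteOfRel_inl (a : α) :
    (bipartiteOfRel r).neighborSet (.inl a) = Sum.inr '' {b | r a b} := by
  ext (a' | b) <;> simp [bipartiteOfRel]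

lemma neighborSet_bipartiteOfRel_inr (b : β) :
    (bipartiteOfRel r).neighborSet (.inr b) = Sum.inl '' {a | r a b} := by
  ext (a | b') <;> simp [bipartiteOfRel]

lemma ncard_neighborSet_bipartiteOfRel_le {D : ℕ} (hα : ∀ a, {b | r a b}.ncard ≤ D)
    (hβ : ∀ b, {a | r a b}.ncard ≤ D) (v : α ⊕ β) :
    ((bipartiteOfRel r).neighborSet v).ncard ≤ D := by
  rcases v with a | b
  · rw [neighborSet_bipartiteOfRel_inl, ncard_image_of_injective _ Sum.inr_injective]
    exact hα a
  · rw [neighborSet_bipartiteOfRel_inr, ncard_image_of_injective _ Sum.inl_injective]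
    exact hβ b

end bipartiteOfRel

lemma HasIT.exists_sections {G : SimpleGraph (α ⊕ β)} {pA : α → κ} {pB : β → π}
    (h : HasIT G (Sum.map pA pB)) :
    ∃ (σA : κ → α) (σB : π → β), (∀ c, pA (σA c) = c) ∧ (∀ q, pB (σB q) = q) ∧
      ∀ c q, ¬ G.Adj (.inl (σA c)) (.inr (σB q)) := by
  obtain ⟨f, hf, hind⟩ := h
  have hA : ∀ c, ∃ a, f (.inl c) = .inl a ∧ pA a = c := fun c => by
    have := hf (.inl c)
    rcases hfc : f (.inl c) with a | b <;> simp_all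
  have hB : ∀ q, ∃ b, f (.inr q) = .inr b ∧ pB b = q := fun q => by
    have := hf (.inr q)
    rcases hfq : f (.inr q) with a | b <;> simp_all
  choose σA hσA hpA using hA
  choose σB hσB hpB using hB
  exact ⟨σA, σB, hpA, hpB, fun c q => by simpa [hσA, hσB] using hind (.inl c) (.inr q)⟩

lemma ncard_setOf_fst_eq [Finite β] (x : α) : {v : α × β | v.1 = x}.ncard = Nat.card β := by
  have : {v : α × β | v.1 = x} = {x} ×ˢ univ := by ext; simp
  rw [this, ncard_prod, ncard_singleton, ncard_univ, one_mul]

lemma ncard_le_of_injOn_fin {X : Type*} {D : ℕ} {s : Set X} (f : X → Fin D) (hf : InjOn f s) :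
    s.ncard ≤ D := by
  simpa using ncard_le_ncard_of_injOn f (fun _ _ => mem_univ _) hf (t := univ)

def IsSharpnessExample (D N : ℕ) (H : SimpleGraph (α ⊕ β)) (pA : α → κ) (pB : β → π) :
    Prop :=
  (∀ a b : α, ¬ H.Adj (.inl a) (.inl b)) ∧
  (∀ a b : β, ¬ H.Adj (.inr a) (.inr b)) ∧
  (∀ v : α ⊕ β, (H.neighborSet v).ncard ≤ D) ∧
  (∀ i : κ, {v | pA v = i}.ncard = N) ∧
  (∀ j : π, {v | pB v = j}.ncard = 2) ∧
  (∀ (a : α) (x y : β), pB x = pB y → x ≠ y →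
    ¬ (H.Adj (.inl a) (.inr x) ∧ H.Adj (.inl a) (.inr y))) ∧
  ¬ HasIT H (Sum.map pA pB)

lemma ncard_setOf_equiv_comp_eq {X X' I I' : Type*} (p : X → I) (e : X ≃ X') (e' : I ≃ I')
    (i : I') : {v | e' (p (e.symm v)) = i}.ncard = {x | p x = e'.symm i}.ncard := by
  rw [← ncard_preimage_of_injective_subset_range e.symm.injective (by simp)]
  simp [← Equiv.eq_symm_apply]

lemma HasIT.of_comap_equiv {V V' ι ι' : Type*} {G : SimpleGraph V} {p : V → ι} (e : V ≃ V')
    (e' : ι ≃ ι') (h : HasIT (G.comap e.symm) (fun v => e' (p (e.symm v)))) : HasIT G p := by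
  obtain ⟨f, hf, hind⟩ := h
  refine ⟨fun i => e.symm (f (e' i)), fun i => ?_, fun i j => hind (e' i) (e' j)⟩
  simpa using congrArg e'.symm (hf (e' i))

lemma IsSharpnessExample.congr {α' β' κ' π' : Type*} {D N : ℕ} {H : SimpleGraph (α ⊕ β)}
    {pA : α → κ} {pB : β → π} (h : IsSharpnessExample D N H pA pB)
    (eα : α ≃ α') (eβ : β ≃ β') (eκ : κ ≃ κ') (eπ : π ≃ π') :
    IsSharpnessExample D N (H.comap (Equiv.sumCongr eα eβ).symm)
      (fun v => eκ (pA (eα.symm v))) (fun v => eπ (pB (eβ.symm v))) := by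
  obtain ⟨hAA, hBB, hdeg, hfibA, hfibB, hpair, hIT⟩ := h
  refine ⟨fun a b => hAA _ _, fun a b => hBB _ _, fun v => ?_, fun i => ?_, fun j => ?_,
    fun a x y hxy hne => hpair _ _ _ (by simpa using hxy) (by simpa using hne), fun h' => hIT ?_⟩
  · rw [show (H.comap _).neighborSet v = _ ⁻¹' H.neighborSet _ from rfl,
      ncard_preimage_of_injective_subset_range (Equiv.injective _) (by simp)]
    exact hdeg _
  · rw [ncard_setOf_equiv_comp_eq]; exact hfibA _
  · rw [ncard_setOf_equiv_comp_eq]; exact hfibB _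
  · refine HasIT.of_comap_equiv (Equiv.sumCongr eα eβ) (Equiv.sumCongr eκ eπ) ?_
    convert h' using 1
    funext v
    rcases v with a | b <;> rfl

section Gadget

variable {Γ P : Type*} {D : ℕ} (ρ : α → Γ × Bool × P) (coord : P → Fin D × Fin D)

/-- `((γ, g, h), s)` is vertex `s` of the pair `(γ, g, h)`, side `false` is the `S`-side, and
`coord p` is (group, index in the group) of position `p`. -/
def gadgetRel (a : α) : (Γ × Fin D × Fin D) × Bool → Prop
  | ((γ, g, h), s) => ∃ p, ρ a = (γ, s, p) ∧ (coord p).1 = if s then h else g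

lemma ncard_setOf_gadgetRel_left_le (a : α) : {b | gadgetRel ρ coord a b}.ncard ≤ D := by
  refine ncard_le_of_injOn_fin (fun b => if b.2 then b.1.2.1 else b.1.2.2) ?_
  rintro ⟨⟨γ, g, h⟩, s⟩ ⟨p, hp, hg⟩ ⟨⟨γ', g', h'⟩, s'⟩ ⟨p', hp', hg'⟩ heq
  obtain ⟨rfl, rfl, rfl⟩ : γ = γ' ∧ s = s' ∧ p = p' := by simpa using hp.symm.trans hp'
  cases s <;> simp_all

lemma ncard_setOf_gadgetRel_right_le (hρ : Injective ρ) (hcoord : Injective coord)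
    (b : (Γ × Fin D × Fin D) × Bool) : {a | gadgetRel ρ coord a b}.ncard ≤ D := by
  obtain ⟨⟨γ, g, h⟩, s⟩ := b
  refine ncard_le_of_injOn_fin (fun a => (coord (ρ a).2.2).2) ?_
  rintro a ⟨p, hp, hg⟩ a' ⟨p', hp', hg'⟩ heq
  simp only [hp, hp'] at heq
  have : p = p' := hcoord (Prod.ext (hg.trans hg'.symm) heq)
  exact hρ (by rw [hp, hp', this])

lemma gadgetRel_side_eq {a : α} {q : Γ × Fin D × Fin D} {s s' : Bool}
    (h : gadgetRel ρ coord a (q, s)) (h' : gadgetRel ρ coord a (q, s')) : s = s' := by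
  obtain ⟨γ, g, k⟩ := q
  obtain ⟨p, hp, -⟩ := h
  obtain ⟨p', hp', -⟩ := h'
  simp_all

lemma not_hasIT_gadgetRel {pA : α → κ}
    (hconflict : ∀ σ : κ → α, (∀ c, pA (σ c) = c) →
      ∃ c₁ c₂ γ p₁ p₂, ρ (σ c₁) = (γ, false, p₁) ∧ ρ (σ c₂) = (γ, true, p₂)) :
    ¬ HasIT (bipartiteOfRel (gadgetRel ρ coord)) (Sum.map pA Prod.fst) := by
  intro hIT
  obtain ⟨σA, σB, hσA, hσB, hind⟩ := hIT.exists_sections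
  obtain ⟨c₁, c₂, γ, p₁, p₂, h₁, h₂⟩ := hconflict σA hσA
  set q := (γ, (coord p₁).1, (coord p₂).1)
  have hq : σB q = (q, (σB q).2) := Prod.ext (hσB q) rfl
  cases hs : (σB q).2 with
  | false => exact hind c₁ q (by rw [hq, hs]; exact ⟨p₁, h₁, rfl⟩)
  | true => exact hind c₂ q (by rw [hq, hs]; exact ⟨p₂, h₂, rfl⟩)

end Gadget

lemma isSharpnessExample_gadget {S Γ P : Type*} [Finite S] {D : ℕ} (ρ : κ × S → Γ × Bool × P)
    (hρ : Injective ρ) (coord : P → Fin D × Fin D) (hcoord : Injective coord)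
    (hconflict : ∀ s : κ → S, ∃ c₁ c₂ γ p₁ p₂,
      ρ (c₁, s c₁) = (γ, false, p₁) ∧ ρ (c₂, s c₂) = (γ, true, p₂)) :
    IsSharpnessExample D (Nat.card S) (bipartiteOfRel (gadgetRel ρ coord)) Prod.fst Prod.fst := by
  refine ⟨fun _ _ => id, fun _ _ => id,
    ncard_neighborSet_bipartiteOfRel_le _ (ncard_setOf_gadgetRel_left_le ρ coord)
      (ncard_setOf_gadgetRel_right_le ρ coord hρ hcoord),
    ncard_setOf_fst_eq, fun q => by simpa using ncard_setOf_fst_eq (β := Bool) q, ?_,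
    not_hasIT_gadgetRel ρ coord fun σ hσ => ?_⟩
  · rintro a ⟨q, s⟩ ⟨q', s'⟩ (rfl : q = q') hne ⟨hx, hy⟩
    exact hne (Prod.ext rfl (gadgetRel_side_eq ρ coord hx hy))
  · obtain ⟨c₁, c₂, γ, p₁, p₂, h₁, h₂⟩ := hconflict fun c => (σ c).2
    have hσ' : ∀ c, σ c = (c, (σ c).2) := fun c => Prod.ext (hσ c) rfl
    exact ⟨c₁, c₂, γ, p₁, p₂, by rwa [hσ'], by rwa [hσ']⟩

section Chain

variable (n : ℕ)

abbrev ChainClass := Option (Bool × Fin (n + 1))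

abbrev ChainSlot := Fin n ⊕ Fin (n + 1)

/-- `none` is the root class; the slots in `Fin n` are positions of a side without its last one. -/
def chainRole : ChainClass n × ChainSlot n → (Bool × Fin (n + 1)) × Bool × Fin (n + 1)
  | (none, .inl p) => ((true, 0), false, p.castSucc)
  | (none, .inr p) => ((false, 0), false, p)
  | (some (X, j), .inl p) => ((X, j), true, p.castSucc)
  | (some (X, j), .inr p) =>
      Fin.lastCases ((X, p), true, Fin.last n) (fun i => ((X, i.succ), false, p)) j

lemma chainRole_injective : Injective (chainRole n) := by
  rintro ⟨_ | ⟨X, j⟩, p | p⟩ ⟨_ | ⟨X', j'⟩, p' | p'⟩ h <;>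
    (try induction j using Fin.lastCases) <;> (try induction j' using Fin.lastCases) <;>
    simp_all [chainRole, Fin.succ_ne_zero, (Fin.succ_ne_zero _).symm,
      (Fin.castSucc_lt_last _).ne, (Fin.castSucc_lt_last _).ne']

lemma chainRole_conflict (s : ChainClass n → ChainSlot n) :
    ∃ c₁ c₂ γ p₁ p₂, chainRole n (c₁, s c₁) = (γ, false, p₁) ∧
      chainRole n (c₂, s c₂) = (γ, true, p₂) := by
  by_contra! hfree
  obtain ⟨X, hroot⟩ : ∃ X, ∃ c p, chainRole n (c, s c) = ((X, 0), false, p) := by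
    rcases hs : s none with p | p
    · exact ⟨true, none, p.castSucc, by simp [chainRole, hs]⟩
    · exact ⟨false, none, p, by simp [chainRole, hs]⟩
  have hchain : ∀ j, ∃ c p, chainRole n (c, s c) = ((X, j), false, p) := by
    refine Fin.induction hroot fun i ⟨c, p, hc⟩ => ?_
    rcases hs : s (some (X, i.castSucc)) with p' | p'
    · exact absurd (by simp [chainRole, hs]) (hfree c (some (X, i.castSucc)) _ p p'.castSucc hc)
    · exact ⟨some (X, i.castSucc), p', by simp [chainRole, hs]⟩
  rcases hs : s (some (X, Fin.last n)) with p | p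
  · obtain ⟨c, p', hc⟩ := hchain (Fin.last n)
    exact hfree c (some (X, Fin.last n)) _ p' p.castSucc hc (by simp [chainRole, hs])
  · obtain ⟨c, p', hc⟩ := hchain p
    exact hfree c (some (X, Fin.last n)) _ p' (Fin.last n) hc (by simp [chainRole, hs])

end Chain

/-- Sharpness in the very asymmetric setting: for every `D ≥ 1` there is a bipartite
graph of maximum degree at most `D` with the `A`-side partitioned into classes of size
`2D² - 1` and the `B`-side partitioned into pairs, no vertex of `A` adjacent to both
vertices of any pair, having no independent transversal. -/
theorem stmt11 (D : ℕ) (hD : 0 < D) :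
    ∃ (nA nB sA sB : ℕ) (H : SimpleGraph (Fin nA ⊕ Fin nB))
      (pA : Fin nA → Fin sA) (pB : Fin nB → Fin sB),
      (∀ a b : Fin nA, ¬ H.Adj (.inl a) (.inl b)) ∧
      (∀ a b : Fin nB, ¬ H.Adj (.inr a) (.inr b)) ∧
      (∀ v : Fin nA ⊕ Fin nB, (H.neighborSet v).ncard ≤ D) ∧
      (∀ i : Fin sA, {v | pA v = i}.ncard = 2 * D ^ 2 - 1) ∧
      (∀ j : Fin sB, {v | pB v = j}.ncard = 2) ∧
      (∀ (a : Fin nA) (x y : Fin nB), pB x = pB y → x ≠ y →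
        ¬ (H.Adj (.inl a) (.inr x) ∧ H.Adj (.inl a) (.inr y))) ∧
      ¬ HasIT H (Sum.map pA pB) := by
  obtain ⟨n, hn⟩ : ∃ n, n + 1 = D * D := ⟨D * D - 1, Nat.sub_add_cancel (Nat.mul_pos hD hD)⟩
  have key := isSharpnessExample_gadget (chainRole n) (chainRole_injective n)
    (finProdFinEquiv.symm ∘ Fin.cast hn)
    (finProdFinEquiv.symm.injective.comp (Fin.cast_injective _)) (chainRole_conflict n)
  rw [show Nat.card (ChainSlot n) = 2 * D ^ 2 - 1 by
    rw [Nat.card_sum, Nat.card_fin, Nat.card_fin, sq]; omega] at key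
  exact ⟨_, _, _, _, _, _, _, key.congr (Fintype.equivFin _) (Fintype.equivFin _)
    (Fintype.equivFin _) (Fintype.equivFin _)⟩
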